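/- Let R be a ring and a, b ∈ R with a^2 = 1, b^2 = 1, and a - b = b*a*b - a*b*a. If 1 + a*b has a Drazin inverse w, then w*a is a Drazin inverse of a + b: (a+b)*(w*a) = (w*a)*(a+b), (w*a)*(a+b)*(w*a) = w*a, and (a+b) - (a+b)^2*(w*a) is nilpotent. -/
import Mathlib

private lemma idem_pow {R : Type*} [Monoid R] {e : R} (he : e * e = e) :
    ∀ m : ℕ, e ^ (m + 1) = e := by
  intro m
  induction m with
  | zero => simp
  | succ n ih => rw [pow_succ, ih, he]

private lemma conj_pow' {R : Type*} [Monoid R] (a u : R) (ha2 : a * a = 1) :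
    ∀ m : ℕ, (a * u * a) ^ (m + 1) = a * u ^ (m + 1) * a := by
  intro m
  induction m with
  | zero => simp
  | succ m ih =>
    rw [pow_succ, ih, pow_succ u (m + 1)]
    generalize u ^ (m + 1) = v
    calc a * v * a * (a * u * a) = a * v * (a * a) * (u * a) := by noncomm_ring
      _ = a * v * (u * a) := by rw [ha2, mul_one]
      _ = a * (v * u) * a := by noncomm_ring

private lemma key1 {R : Type*} [Ring R] (c x : R) (h1 : c * x = x * c)
    (h2 : x * c * x = x) : ∀ m : ℕ, c ^ (m + 1) * (1 - c * x) = (c - c ^ 2 * x) ^ (m + 1) := by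
  have hstep : (1 - c * x) * (c - c ^ 2 * x) = c * (1 - c * x) := by
    linear_combination (norm := noncomm_ring) c * h1 - c * h1 * (c * x) + c * c * h2
  intro m
  induction m with
  | zero => noncomm_ring
  | succ m ih =>
    rw [pow_succ (c - c ^ 2 * x), ← ih, mul_assoc, hstep, ← mul_assoc, ← pow_succ]

private lemma drazin_unique {R : Type*} [Ring R] (c x y : R)
    (hx1 : c * x = x * c) (hx2 : x * c * x = x)
    (hx3 : IsNilpotent (c - c ^ 2 * x))
    (hy1 : c * y = y * c) (hy2 : y * c * y = y)
    (hy3 : IsNilpotent (c - c ^ 2 * y)) : x = y := by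
  obtain ⟨k, hk⟩ := hx3
  obtain ⟨l, hl⟩ := hy3
  set N := k + l + 1 with hN
  have hcx : Commute c x := hx1
  have hcy : Commute c y := hy1
  have hzx : (c - c ^ 2 * x) ^ N = 0 := by
    rw [show N = k + (l + 1) by omega, pow_add, hk, zero_mul]
  have hzy : (c - c ^ 2 * y) ^ N = 0 := by
    rw [show N = l + (k + 1) by omega, pow_add, hl, zero_mul]
  have hNx : c ^ N * (1 - c * x) = 0 := by
    rw [show N = (k + l) + 1 by omega] at hzx ⊢
    rw [key1 c x hx1 hx2 (k + l)]; exact hzx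
  have hNy : c ^ N * (1 - c * y) = 0 := by
    rw [show N = (k + l) + 1 by omega] at hzy ⊢
    rw [key1 c y hy1 hy2 (k + l)]; exact hzy
  have hc_x : c ^ N = c ^ (N + 1) * x := by
    rw [mul_sub, mul_one, sub_eq_zero] at hNx
    rw [hNx, ← mul_assoc, ← pow_succ]
  have hc_y : c ^ N = c ^ (N + 1) * y := by
    rw [mul_sub, mul_one, sub_eq_zero] at hNy
    rw [hNy, ← mul_assoc, ← pow_succ]
  have hc_y' : c ^ N = y * c ^ (N + 1) := hc_y.trans (hcy.pow_left (N + 1)).eq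
  have hidemx : (c * x) * (c * x) = c * x := by
    rw [mul_assoc c x (c * x), ← mul_assoc x c x, hx2]
  have hidemy : (y * c) * (y * c) = y * c := by
    rw [← mul_assoc, hy2]
  have hxe : ∀ m : ℕ, x * (c * x) ^ m = x := by
    intro m
    induction m with
    | zero => simp
    | succ n ih => rw [pow_succ', ← mul_assoc, ← mul_assoc, hx2, ih]
  have hye : ∀ m : ℕ, y * (c * y) ^ m = y := by
    intro m
    induction m with
    | zero => simp
    | succ n ih => rw [pow_succ', ← mul_assoc, ← mul_assoc, hy2, ih]
  have hx_rep : x = c ^ N * x ^ (N + 1) := by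
    calc x = x * (c * x) ^ N := (hxe N).symm
      _ = x * (c ^ N * x ^ N) := by rw [hcx.mul_pow]
      _ = (c ^ N * x) * x ^ N := by rw [← mul_assoc, (hcx.symm.pow_right N).eq]
      _ = c ^ N * x ^ (N + 1) := by rw [mul_assoc, ← pow_succ']
  have hy_rep : y = y ^ (N + 1) * c ^ N := by
    calc y = y * (c * y) ^ N := (hye N).symm
      _ = y * (c ^ N * y ^ N) := by rw [hcy.mul_pow]
      _ = y * (y ^ N * c ^ N) := by rw [(hcy.pow_pow N N).eq]
      _ = y ^ (N + 1) * c ^ N := by rw [← mul_assoc, ← pow_succ']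
  have h1 : x = y * (c * x) := by
    calc x = c ^ N * x ^ (N + 1) := hx_rep
      _ = (y * c ^ (N + 1)) * x ^ (N + 1) := by rw [← hc_y']
      _ = y * ((c * x) ^ (N + 1)) := by rw [mul_assoc, hcx.mul_pow]
      _ = y * (c * x) := by rw [idem_pow hidemx]
  have h2 : y = (y * c) * x := by
    calc y = y ^ (N + 1) * c ^ N := hy_rep
      _ = y ^ (N + 1) * (c ^ (N + 1) * x) := by rw [← hc_x]
      _ = ((y * c) ^ (N + 1)) * x := by rw [← mul_assoc, (hcy.symm.mul_pow (N + 1))]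
      _ = (y * c) * x := by rw [idem_pow hidemy]
  rw [h1, ← mul_assoc, ← h2]

theorem stmt_14 {R : Type*} [Ring R] (a b w : R)
    (ha : a ^ 2 = 1) (hb : b ^ 2 = 1) (hab : a - b = b * a * b - a * b * a)
    (hw1 : (1 + a * b) * w = w * (1 + a * b)) (hw2 : w * (1 + a * b) * w = w)
    (hw3 : IsNilpotent ((1 + a * b) - (1 + a * b) ^ 2 * w)) :
    (a + b) * (w * a) = (w * a) * (a + b) ∧
    (w * a) * (a + b) * (w * a) = w * a ∧
    IsNilpotent ((a + b) - (a + b) ^ 2 * (w * a)) := by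
  have ha2 : a * a = 1 := by rw [← pow_two]; exact ha
  have hb2 : b * b = 1 := by rw [← pow_two]; exact hb
  have hwu : w * (a * b) = (a * b) * w := by
    linear_combination (norm := noncomm_ring) (- hw1)
  have F1 : a * b * (a * b) = 1 - a * b + b * a := by
    linear_combination (norm := noncomm_ring) (-(a * hab)) + ha2 + ha2 * (b * a)
  have F2 : b * a * (b * a) = 1 + a * b - b * a := by
    linear_combination (norm := noncomm_ring) b * hab + hb2 + hb2 * (a * b)
  have hqp : (1 + a * b) ^ 2 - (1 + a * b) = 1 + b * a := by
    linear_combination (norm := noncomm_ring) F1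
  have hwt : w * (b * a) = (b * a) * w := by
    linear_combination (norm := noncomm_ring)
      hwu * (a * b) + (a * b) * hwu + hwu - w * F1 + F1 * w
  have hpa : (1 + a * b) * a = b * (1 + a * b) := by
    linear_combination (norm := noncomm_ring) hab
  have hpb : (1 + a * b) * b = b * (1 + b * a) := by
    linear_combination (norm := noncomm_ring) a * hb2 - hb2 * a
  have hqa : (1 + b * a) * a = a * (1 + a * b) := by
    linear_combination (norm := noncomm_ring) b * ha2 - ha2 * b
  have haq : a * (1 + b * a) = (1 + a * b) * a := by noncomm_ring
  have htq : (b * a) * (1 + b * a) = 1 + a * b := by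
    linear_combination (norm := noncomm_ring) F2
  have hq_up : (a * b) * (1 + a * b) = 1 + b * a := by
    linear_combination (norm := noncomm_ring) F1
  have hut : (a * b) * (b * a) = 1 := by
    linear_combination (norm := noncomm_ring) a * hb2 * a + ha2
  have hpt : (1 + a * b) * (b * a) = (b * a) * (1 + a * b) := by
    linear_combination (norm := noncomm_ring) a * hb2 * a - b * ha2 * b + ha2 - hb2
  obtain ⟨k, hk⟩ := hw3
  -- X side : a*w*a is a Drazin inverse of 1+b*a
  have X1 : (1 + b * a) * (a * w * a) = (a * w * a) * (1 + b * a) := by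
    calc (1 + b * a) * (a * w * a) = ((1 + b * a) * a) * (w * a) := by noncomm_ring
      _ = (a * (1 + a * b)) * (w * a) := by rw [hqa]
      _ = a * ((1 + a * b) * w) * a := by noncomm_ring
      _ = a * (w * (1 + a * b)) * a := by rw [hw1]
      _ = (a * w) * ((1 + a * b) * a) := by noncomm_ring
      _ = (a * w) * (a * (1 + b * a)) := by rw [haq]
      _ = (a * w * a) * (1 + b * a) := by noncomm_ring
  have haqa : a * (1 + b * a) * a = 1 + a * b := by
    calc a * (1 + b * a) * a = ((1 + a * b) * a) * a := by rw [haq]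
      _ = (1 + a * b) * (a * a) := by rw [mul_assoc]
      _ = 1 + a * b := by rw [ha2, mul_one]
  have X2 : (a * w * a) * (1 + b * a) * (a * w * a) = a * w * a := by
    calc (a * w * a) * (1 + b * a) * (a * w * a)
        = (a * w) * (a * (1 + b * a) * a) * (w * a) := by noncomm_ring
      _ = (a * w) * (1 + a * b) * (w * a) := by rw [haqa]
      _ = a * (w * (1 + a * b) * w) * a := by noncomm_ring
      _ = a * w * a := by rw [hw2]
  have e1 : (1 : R) + b * a = a * (1 + a * b) * a := by
    calc (1 : R) + b * a = (1 + b * a) * (a * a) := by rw [ha2, mul_one]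
      _ = ((1 + b * a) * a) * a := by rw [mul_assoc]
      _ = (a * (1 + a * b)) * a := by rw [hqa]
      _ = a * (1 + a * b) * a := rfl
  have e2 : (1 + b * a) ^ 2 * (a * w * a) = a * ((1 + a * b) * (1 + a * b) * w) * a := by
    calc (1 + b * a) ^ 2 * (a * w * a)
        = (1 + b * a) * (((1 + b * a) * a) * (w * a)) := by rw [pow_two]; noncomm_ring
      _ = (1 + b * a) * ((a * (1 + a * b)) * (w * a)) := by rw [hqa]
      _ = ((1 + b * a) * a) * ((1 + a * b) * (w * a)) := by noncomm_ring
      _ = (a * (1 + a * b)) * ((1 + a * b) * (w * a)) := by rw [hqa]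
      _ = a * ((1 + a * b) * (1 + a * b) * w) * a := by noncomm_ring
  have hqform : (1 + b * a) - (1 + b * a) ^ 2 * (a * w * a)
      = a * ((1 + a * b) - (1 + a * b) ^ 2 * w) * a := by
    linear_combination (norm := noncomm_ring) e1 - e2
  have X3 : IsNilpotent ((1 + b * a) - (1 + b * a) ^ 2 * (a * w * a)) := by
    rw [hqform]
    exact ⟨k + 1, by
      rw [conj_pow' a _ ha2 k, pow_succ, hk, zero_mul, mul_zero, zero_mul]⟩
  -- Y side : w*(b*a) is a Drazin inverse of 1+b*a
  have Y1 : (1 + b * a) * (w * (b * a)) = (w * (b * a)) * (1 + b * a) := by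
    linear_combination (norm := noncomm_ring) (-(hwt * (b * a)))
  have Y2 : (w * (b * a)) * (1 + b * a) * (w * (b * a)) = w * (b * a) := by
    calc (w * (b * a)) * (1 + b * a) * (w * (b * a))
        = w * ((b * a) * (1 + b * a)) * (w * (b * a)) := by noncomm_ring
      _ = w * (1 + a * b) * (w * (b * a)) := by rw [htq]
      _ = (w * (1 + a * b) * w) * (b * a) := by noncomm_ring
      _ = w * (b * a) := by rw [hw2]
  have h1q : (1 + b * a) * (1 + b * a) = (a * b) * (a * b) * ((1 + a * b) * (1 + a * b)) := by
    calc (1 + b * a) * (1 + b * a)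
        = ((a * b) * (1 + a * b)) * ((a * b) * (1 + a * b)) := by rw [hq_up]
      _ = (a * b) * (a * b) * ((1 + a * b) * (1 + a * b)) := by noncomm_ring
  have e3 : (1 + b * a) ^ 2 * (w * (b * a)) = (a * b) * ((1 + a * b) ^ 2 * w) := by
    calc (1 + b * a) ^ 2 * (w * (b * a))
        = (a * b) * (a * b) * ((1 + a * b) * (1 + a * b)) * (w * (b * a)) := by
          rw [pow_two, h1q]
      _ = (a * b) * (a * b) * ((1 + a * b) * (1 + a * b)) * ((b * a) * w) := by rw [hwt]
      _ = (a * b) * (a * b) * ((1 + a * b) * ((1 + a * b) * (b * a))) * w := by noncomm_ring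
      _ = (a * b) * (a * b) * ((1 + a * b) * ((b * a) * (1 + a * b))) * w := by rw [hpt]
      _ = (a * b) * (a * b) * (((1 + a * b) * (b * a)) * (1 + a * b)) * w := by noncomm_ring
      _ = (a * b) * (a * b) * (((b * a) * (1 + a * b)) * (1 + a * b)) * w := by rw [hpt]
      _ = (a * b) * ((a * b) * (b * a)) * ((1 + a * b) * (1 + a * b)) * w := by noncomm_ring
      _ = (a * b) * 1 * ((1 + a * b) * (1 + a * b)) * w := by rw [hut]
      _ = (a * b) * ((1 + a * b) ^ 2 * w) := by noncomm_ring
  have E : (1 + b * a) - (1 + b * a) ^ 2 * (w * (b * a))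
      = (a * b) * ((1 + a * b) - (1 + a * b) ^ 2 * w) := by
    linear_combination (norm := noncomm_ring) (- hq_up) - e3
  have hn_comm : (a * b) * ((1 + a * b) - (1 + a * b) ^ 2 * w)
      = ((1 + a * b) - (1 + a * b) ^ 2 * w) * (a * b) := by
    linear_combination (norm := noncomm_ring) (1 + a * b) * ((1 + a * b) * hwu)
  have Y3 : IsNilpotent ((1 + b * a) - (1 + b * a) ^ 2 * (w * (b * a))) := by
    rw [E]
    have hc : Commute (a * b) ((1 + a * b) - (1 + a * b) ^ 2 * w) := hn_comm
    exact ⟨k, by rw [hc.mul_pow, hk, mul_zero]⟩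
  have hxy : a * w * a = w * (b * a) :=
    drazin_unique (1 + b * a) (a * w * a) (w * (b * a)) X1 X2 X3 Y1 Y2 Y3
  have hWB : a * w = w * b := by
    calc a * w = (a * w) * (a * a) := by rw [ha2, mul_one]
      _ = (a * w * a) * a := by noncomm_ring
      _ = (w * (b * a)) * a := by rw [hxy]
      _ = (w * b) * (a * a) := by noncomm_ring
      _ = w * b := by rw [ha2, mul_one]
  have hbw2 : b * w = w * (b * a * b) := by
    calc b * w = (a * a) * (b * w) := by rw [ha2, one_mul]
      _ = a * ((a * b) * w) := by noncomm_ring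
      _ = a * (w * (a * b)) := by rw [← hwu]
      _ = (a * w) * (a * b) := by noncomm_ring
      _ = (w * b) * (a * b) := by rw [hWB]
      _ = w * (b * a * b) := by noncomm_ring
  have hw2p : w * (w * (1 + a * b)) = w := by
    calc w * (w * (1 + a * b)) = w * ((1 + a * b) * w) := by rw [← hw1]
      _ = w * (1 + a * b) * w := by rw [← mul_assoc]
      _ = w := hw2
  have g1 : (a + b) * (w * a) = (w * a) * (a + b) := by
    linear_combination (norm := noncomm_ring) hxy + hbw2 * a + w * F2 - w * ha2
  have g2 : (w * a) * (a + b) * (w * a) = w * a := by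
    linear_combination (norm := noncomm_ring)
      w * a * hb2 + hw2p * ((1 + a * b) * b) - hw2p * b - w * w * hqp * b + w * w * hab
        + w * ha2 * (w * a) - w * hwu * a
  refine ⟨g1, g2, ?_⟩
  -- Goal 3
  have hd2 : (a + b) ^ 2 = (a * b) * ((1 + a * b) * (1 + a * b)) := by
    linear_combination (norm := noncomm_ring)
      hb2 - F1 - (a * b) * F1 - a * hb2 * a
  have hd1 : a * (1 + a * b) = a + b := by
    linear_combination (norm := noncomm_ring) ha2 * b
  have powB : ∀ M : ℕ, (1 + a * b) ^ (M + 1) * a = b * (1 + b * a) ^ M * (1 + a * b) := by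
    intro M
    induction M with
    | zero => simpa using hpa
    | succ M ih =>
      calc (1 + a * b) ^ (M + 2) * a
          = (1 + a * b) * ((1 + a * b) ^ (M + 1) * a) := by rw [pow_succ', mul_assoc]
        _ = (1 + a * b) * (b * (1 + b * a) ^ M * (1 + a * b)) := by rw [ih]
        _ = (((1 + a * b) * b) * (1 + b * a) ^ M) * (1 + a * b) := by
            rw [← mul_assoc, ← mul_assoc]
        _ = ((b * (1 + b * a)) * (1 + b * a) ^ M) * (1 + a * b) := by rw [hpb]
        _ = (b * (1 + b * a) ^ (M + 1)) * (1 + a * b) := by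
            rw [pow_succ']; simp only [mul_assoc]
  -- the key nilpotency input
  have T3 : (1 + b * a) ^ (2 * k + 1) * ((1 + a * b) - (1 + a * b) ^ 2 * w) = 0 := by
    have hcomm : Commute (a * b) (1 + a * b) := by
      show (a * b) * (1 + a * b) = (1 + a * b) * (a * b)
      noncomm_ring
    have hq_pow : (1 + b * a) ^ (2 * k + 1)
        = (a * b) ^ (2 * k + 1) * (1 + a * b) ^ (2 * k + 1) := by
      rw [← hq_up, hcomm.mul_pow]
    have hnfac : (1 + a * b) - (1 + a * b) ^ 2 * w = (1 + a * b) * (1 - (1 + a * b) * w) := by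
      noncomm_ring
    have hp_n : (1 + a * b) ^ (2 * k + 1) * ((1 + a * b) - (1 + a * b) ^ 2 * w)
        = ((1 + a * b) - (1 + a * b) ^ 2 * w) ^ (2 * k + 2) := by
      calc (1 + a * b) ^ (2 * k + 1) * ((1 + a * b) - (1 + a * b) ^ 2 * w)
          = (1 + a * b) ^ (2 * k + 1) * ((1 + a * b) * (1 - (1 + a * b) * w)) := by rw [hnfac]
        _ = (1 + a * b) ^ (2 * k + 2) * (1 - (1 + a * b) * w) := by
            rw [← mul_assoc, ← pow_succ]
        _ = ((1 + a * b) - (1 + a * b) ^ 2 * w) ^ (2 * k + 2) :=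
            key1 (1 + a * b) w hw1 hw2 (2 * k + 1)
    have hzero : ((1 + a * b) - (1 + a * b) ^ 2 * w) ^ (2 * k + 2) = 0 := by
      rw [show 2 * k + 2 = k + (k + 2) by omega, pow_add, hk, zero_mul]
    rw [hq_pow, mul_assoc, hp_n, hzero, mul_zero]
  obtain ⟨Q, hQ⟩ : ∃ Q, (1 + b * a) ^ (2 * k + 1) = Q := ⟨_, rfl⟩
  rw [hQ] at T3
  have T1 : (1 + a * b) ^ (2 * k + 2) * a = b * Q * (1 + a * b) := by
    rw [← hQ]; exact powB (2 * k + 1)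
  have T0 : (1 + a * b) ^ (2 * k + 2) = b * Q * ((1 + a * b) * a) := by
    calc (1 + a * b) ^ (2 * k + 2)
        = ((1 + a * b) ^ (2 * k + 2) * a) * a := by rw [mul_assoc, ha2, mul_one]
      _ = (b * Q * (1 + a * b)) * a := by rw [T1]
      _ = b * Q * ((1 + a * b) * a) := by rw [mul_assoc]
  have T2 : (1 + a * b) ^ (2 * k + 2) * ((a + b) * (w * a))
      = b * Q * ((1 + a * b) * ((1 + a * b) * (w * a))) := by
    calc (1 + a * b) ^ (2 * k + 2) * ((a + b) * (w * a))
        = (1 + a * b) ^ (2 * k + 2) * ((a * (1 + a * b)) * (w * a)) := by rw [hd1]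
      _ = ((1 + a * b) ^ (2 * k + 2) * a) * ((1 + a * b) * (w * a)) := by
          simp only [← mul_assoc]
      _ = (b * Q * (1 + a * b)) * ((1 + a * b) * (w * a)) := by rw [T1]
      _ = b * Q * ((1 + a * b) * ((1 + a * b) * (w * a))) := by
          rw [mul_assoc (b * Q)]
  have hfin : (1 + a * b) ^ (2 * k + 2) * (1 - (a + b) * (w * a)) = 0 := by
    calc (1 + a * b) ^ (2 * k + 2) * (1 - (a + b) * (w * a))
        = (1 + a * b) ^ (2 * k + 2) - (1 + a * b) ^ (2 * k + 2) * ((a + b) * (w * a)) := by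
          rw [mul_sub, mul_one]
      _ = b * Q * ((1 + a * b) * a) - b * Q * ((1 + a * b) * ((1 + a * b) * (w * a))) := by
          rw [T2, T0]
      _ = b * (Q * ((1 + a * b) - (1 + a * b) ^ 2 * w)) * a := by noncomm_ring
      _ = b * 0 * a := by rw [T3]
      _ = 0 := by rw [mul_zero, zero_mul]
  have hd_pow : (a + b) ^ (2 * k + 2)
      = (a * b) ^ (k + 1) * (1 + a * b) ^ (2 * k + 2) := by
    have hcomm2 : Commute (a * b) ((1 + a * b) * (1 + a * b)) := by
      show (a * b) * ((1 + a * b) * (1 + a * b)) = ((1 + a * b) * (1 + a * b)) * (a * b)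
      noncomm_ring
    calc (a + b) ^ (2 * k + 2) = ((a + b) ^ 2) ^ (k + 1) := by
          rw [show 2 * k + 2 = 2 * (k + 1) by omega, pow_mul]
      _ = ((a * b) * ((1 + a * b) * (1 + a * b))) ^ (k + 1) := by rw [hd2]
      _ = (a * b) ^ (k + 1) * ((1 + a * b) * (1 + a * b)) ^ (k + 1) := hcomm2.mul_pow (k + 1)
      _ = (a * b) ^ (k + 1) * (1 + a * b) ^ (2 * k + 2) := by
          rw [← pow_two, ← pow_mul, show 2 * (k + 1) = 2 * k + 2 by omega]
  refine ⟨2 * k + 2, ?_⟩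
  calc ((a + b) - (a + b) ^ 2 * (w * a)) ^ (2 * k + 2)
      = (a + b) ^ (2 * k + 2) * (1 - (a + b) * (w * a)) :=
        (key1 (a + b) (w * a) g1 g2 (2 * k + 1)).symm
    _ = (a * b) ^ (k + 1) * ((1 + a * b) ^ (2 * k + 2) * (1 - (a + b) * (w * a))) := by
        rw [hd_pow, mul_assoc]
    _ = 0 := by rw [hfin, mul_zero]
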